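/- arXiv:1011.1701 — 2 statements merged into one kernel-verified Lean document; each statement's English description precedes it below -/
import Mathlib

section
/- Under the variable–variable block of covariance evolution with its initial conditions, for all k, s ∈ L and all y ∈ (0,1] one has δ^{l_k,l_s}(y) = −(k s l̂_k l̂_s / e²) F + (ε l̂_k l̂_s / e)[k(y^s−1) + s(y^k−1)] + 1_{k=s} · k l̂_k (1 − ε y^k). (Theorem 1, equation (1).) -/
open Finset

namespace LDPC

/-- λ(y) = Σ_{k∈L} λ_k y^{k-1} -/
noncomputable def lamP (L : Finset ℕ) (lam : ℕ → ℝ) (y : ℝ) : ℝ :=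
  ∑ k ∈ L, lam k * y ^ (k - 1)

/-- λ'(y) = Σ_{k∈L} (k-1) λ_k y^{k-2} -/
noncomputable def lamD (L : Finset ℕ) (lam : ℕ → ℝ) (y : ℝ) : ℝ :=
  ∑ k ∈ L, ((k : ℝ) - 1) * lam k * y ^ (k - 2)

/-- λ''(y) = Σ_{k∈L} (k-1)(k-2) λ_k y^{k-3} -/
noncomputable def lamDD (L : Finset ℕ) (lam : ℕ → ℝ) (y : ℝ) : ℝ :=
  ∑ k ∈ L, ((k : ℝ) - 1) * ((k : ℝ) - 2) * lam k * y ^ (k - 3)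

/-- ρ(z) = Σ_{k∈R} ρ_k z^{k-1} -/
noncomputable def rhoP (R : Finset ℕ) (rho : ℕ → ℝ) (z : ℝ) : ℝ :=
  ∑ k ∈ R, rho k * z ^ (k - 1)

/-- ρ'(z) = Σ_{k∈R} (k-1) ρ_k z^{k-2} -/
noncomputable def rhoD (R : Finset ℕ) (rho : ℕ → ℝ) (z : ℝ) : ℝ :=
  ∑ k ∈ R, ((k : ℝ) - 1) * rho k * z ^ (k - 2)

/-- x = ελ(y) -/
noncomputable def xF (L : Finset ℕ) (lam : ℕ → ℝ) (ε y : ℝ) : ℝ := ε * lamP L lam y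

/-- x' = ελ'(y) -/
noncomputable def xD (L : Finset ℕ) (lam : ℕ → ℝ) (ε y : ℝ) : ℝ := ε * lamD L lam y

/-- x'' = ελ''(y) -/
noncomputable def xDD (L : Finset ℕ) (lam : ℕ → ℝ) (ε y : ℝ) : ℝ := ε * lamDD L lam y

/-- e = xy -/
noncomputable def eF (L : Finset ℕ) (lam : ℕ → ℝ) (ε y : ℝ) : ℝ := xF L lam ε y * y

/-- a = (x'y + x)/x -/
noncomputable def aF (L : Finset ℕ) (lam : ℕ → ℝ) (ε y : ℝ) : ℝ :=
  (xD L lam ε y * y + xF L lam ε y) / xF L lam ε y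

/-- l̂_k(y) = ε λ_k y^k -/
noncomputable def lhat (lam : ℕ → ℝ) (ε : ℝ) (k : ℕ) (y : ℝ) : ℝ := ε * lam k * y ^ k

/-- r̂_j(y); for j = 1 the special formula x(y-1+ρ(1-x)), else Σ_{i∈R} ρ_i C(i-1,j-1) x^j (1-x)^{i-j}. -/
noncomputable def rhat (L R : Finset ℕ) (lam rho : ℕ → ℝ) (ε : ℝ) (j : ℕ) (y : ℝ) : ℝ :=
  if j = 1 then xF L lam ε y * (y - 1 + rhoP R rho (1 - xF L lam ε y))
  else ∑ i ∈ R, rho i * ((i - 1).choose (j - 1) : ℝ) * xF L lam ε y ^ j *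
    (1 - xF L lam ε y) ^ (i - j)

/-- G_j(y) = j(r̂_{j+1} - r̂_j)/x for j ≤ d_c - 1, and G_{d_c}(y) = -d_c r̂_{d_c}/x. -/
noncomputable def Gf (L R : Finset ℕ) (lam rho : ℕ → ℝ) (ε : ℝ) (dc j : ℕ) (y : ℝ) : ℝ :=
  if j = dc then -((dc : ℝ) * rhat L R lam rho ε dc y) / xF L lam ε y
  else (j : ℝ) * (rhat L R lam rho ε (j + 1) y - rhat L R lam rho ε j y) / xF L lam ε y

/-- F(y) = Σ_{k∈L} (λ_k/k)[ε²(y^k-1)² + ε(y^k-1)] -/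
noncomputable def Ff (L : Finset ℕ) (lam : ℕ → ℝ) (ε y : ℝ) : ℝ :=
  ∑ k ∈ L, lam k / (k : ℝ) * (ε ^ 2 * (y ^ k - 1) ^ 2 + ε * (y ^ k - 1))

/-- F'(y) = 2Σ_{k∈L} ε²λ_k y^{2k-1} - (ε - ε̃)x -/
noncomputable def Fd (L : Finset ℕ) (lam : ℕ → ℝ) (ε y : ℝ) : ℝ :=
  2 * ∑ k ∈ L, ε ^ 2 * lam k * y ^ (2 * k - 1) - (ε - (1 - ε)) * xF L lam ε y

/-- V_{i,j}(y) = Σ_{s∈R} sρ_s C(s-1,i-1)C(s-1,j-1) x^{i+j} (1-x)^{2s-i-j} -/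
noncomputable def Vf (L R : Finset ℕ) (lam rho : ℕ → ℝ) (ε : ℝ) (i j : ℕ) (y : ℝ) : ℝ :=
  ∑ s ∈ R, (s : ℝ) * rho s * ((s - 1).choose (i - 1) : ℝ) * ((s - 1).choose (j - 1) : ℝ) *
    xF L lam ε y ^ (i + j) * (1 - xF L lam ε y) ^ (2 * s - i - j)

/-- The variable–variable block of covariance evolution, with its initial conditions. -/
def CEvv (L : Finset ℕ) (lam : ℕ → ℝ) (ε : ℝ) (δll : ℕ → ℕ → ℝ → ℝ) : Prop :=
  (∀ k ∈ L, ∀ s ∈ L, ∀ y ∈ Set.Ioc (0 : ℝ) 1,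
    HasDerivWithinAt (δll k s)
      (-(xF L lam ε y) *
          (((s : ℝ) * lhat lam ε s y / eF L lam ε y ^ 2) * ∑ t ∈ L, δll k t y
            + ((k : ℝ) * lhat lam ε k y / eF L lam ε y ^ 2) * ∑ t ∈ L, δll s t y
            - (((k : ℝ) + (s : ℝ)) / eF L lam ε y) * δll k s y)
        - xF L lam ε y * (k : ℝ) * (s : ℝ) * (lhat lam ε k y / eF L lam ε y) *
            ((if k = s then (1 : ℝ) else 0) - lhat lam ε s y / eF L lam ε y))
      (Set.Ioc 0 1) y)
  ∧ ∀ k ∈ L, ∀ s ∈ L,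
      δll k s 1 = (if k = s then (1 : ℝ) else 0) * (k : ℝ) * lam k * ε * (1 - ε)

/-- The variable–check block of covariance evolution, with its initial conditions. -/
def CEvc (L R : Finset ℕ) (lam rho : ℕ → ℝ) (ε : ℝ) (dc : ℕ)
    (δll δlr : ℕ → ℕ → ℝ → ℝ) : Prop :=
  (∀ k ∈ L, ∀ j ∈ Finset.Icc 1 (dc - 1), ∀ y ∈ Set.Ioc (0 : ℝ) 1,
    HasDerivWithinAt (δlr k j)
      (2 * (xD L lam ε y / eF L lam ε y) * Gf L R lam rho ε dc j y * ∑ t ∈ L, δll k t y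
        - (Gf L R lam rho ε dc j y / y ^ 2) * ∑ i ∈ L, ((i : ℝ) - 1) * δll k i y
        - xF L lam ε y * (aF L lam ε y - (k : ℝ)) * ((k : ℝ) * lhat lam ε k y / eF L lam ε y)
            * (Gf L R lam rho ε dc j y / y)
        - ((k : ℝ) * lhat lam ε k y / (eF L lam ε y * y)) * ∑ t ∈ L, δlr t j y
        + ((k : ℝ) / y) * δlr k j y
        - (j : ℝ) * (xD L lam ε y / xF L lam ε y) *
            ((if j + 1 = dc then
                (∑ t ∈ L, δll k t y) - ∑ j' ∈ Finset.Icc 1 (dc - 1), δlr k j' y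
              else δlr k (j + 1) y) - δlr k j y))
      (Set.Ioc 0 1) y)
  ∧ ∀ k ∈ L, ∀ j ∈ Finset.Icc 1 (dc - 1),
      δlr k j 1 = -((k : ℝ) * lam k * ε * (1 - ε)) * Gf L R lam rho ε dc j 1

/-- The check–check block of covariance evolution, with symmetry and initial conditions. -/
def CErr (L R : Finset ℕ) (lam rho : ℕ → ℝ) (ε : ℝ) (dc : ℕ)
    (δlr δrr : ℕ → ℕ → ℝ → ℝ) : Prop :=
  (∀ i ∈ Finset.Icc 1 (dc - 1), ∀ j ∈ Finset.Icc 1 (dc - 1), ∀ y ∈ Set.Ioc (0 : ℝ) 1,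
      δrr i j y = δrr j i y)
  ∧ (∀ i ∈ Finset.Icc 1 (dc - 1), ∀ j ∈ Finset.Icc 1 (dc - 1), ∀ y ∈ Set.Ioc (0 : ℝ) 1,
    HasDerivWithinAt (δrr i j)
      (-(xD L lam ε y / xF L lam ε y) *
          ((i : ℝ) * (if i + 1 = dc then
                (∑ k ∈ L, δlr k j y) - ∑ i' ∈ Finset.Icc 1 (dc - 1), δrr i' j y
              else δrr (i + 1) j y)
            + (j : ℝ) * (if j + 1 = dc then
                (∑ k ∈ L, δlr k i y) - ∑ i' ∈ Finset.Icc 1 (dc - 1), δrr i' i y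
              else δrr (j + 1) i y)
            - ((i : ℝ) + (j : ℝ)) * δrr i j y)
        + (∑ k ∈ L, ((2 * aF L lam ε y - (k : ℝ) - 1) / y ^ 2) *
            (δlr k j y * Gf L R lam rho ε dc i y + δlr k i y * Gf L R lam rho ε dc j y))
        - xF L lam ε y *
            (((xDD L lam ε y * xF L lam ε y - xD L lam ε y ^ 2) / xF L lam ε y ^ 2) *
                Gf L R lam rho ε dc i y * Gf L R lam rho ε dc j y
              + (i : ℝ) * (j : ℝ) * (xD L lam ε y / xF L lam ε y ^ 2) *
                  ((if i = j then rhat L R lam rho ε (j + 1) y + rhat L R lam rho ε j y else 0)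
                    - (if i = j + 1 then rhat L R lam rho ε i y else 0)
                    - (if j = i + 1 then rhat L R lam rho ε j y else 0))))
      (Set.Ioc 0 1) y)
  ∧ ∀ i ∈ Finset.Icc 1 (dc - 1), ∀ j ∈ Finset.Icc 1 (dc - 1),
      δrr i j 1 = (if i = j then (i : ℝ) * rhat L R lam rho ε i 1 else 0)
        - Vf L R lam rho ε i j 1
        + (∑ k ∈ L, ((k : ℝ) - 1) * lam k) * ε * (1 - ε) *
            Gf L R lam rho ε dc i 1 * Gf L R lam rho ε dc j 1

end LDPC

/-!
Call the right-hand side `g`. Since `e = Σₜ l̂ₜ` and `y · d/dy` multiplies `l̂ₖ` by `k`, the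
derivatives of `l̂ₖ`, `e` and `F` are explicit, and with `x = e / y` the fact that `g` solves the
variable–variable system becomes a rational identity in `l̂ₖ, l̂ₛ, e, F, yᵏ, yˢ` and the two sums
`Σₜ t l̂ₜ`, `Σₜ l̂ₜ (yᵗ - 1)`. The difference `δ - g` then solves a homogeneous linear system whose
coefficients are bounded on `[a, 1]` for every `a > 0` (because `0 < l̂ₜ ≤ e`), and it vanishes at
`y = 1`; Grönwall uniqueness makes it vanish on `[a, 1]`.
-/

open Set Matrix NNReal

theorem Matrix.norm_mulVec_le_of_abs_le {ι : Type*} [Fintype ι] {A : Matrix ι ι ℝ} {C : ℝ≥0}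
    (hA : ∀ i j, |A i j| ≤ C) (z : ι → ℝ) : ‖A *ᵥ z‖ ≤ Fintype.card ι * C * ‖z‖ := by
  refine (pi_norm_le_iff_of_nonneg (by positivity)).2 fun i => ?_
  calc ‖(A *ᵥ z) i‖ ≤ ∑ j, |A i j| * ‖z‖ := by
        rw [Real.norm_eq_abs, Matrix.mulVec, dotProduct]
        refine (abs_sum_le_sum_abs _ _).trans (sum_le_sum fun j _ => ?_)
        rw [abs_mul]
        exact mul_le_mul_of_nonneg_left (norm_le_pi_norm z j) (abs_nonneg _)
    _ ≤ ∑ _j : ι, C * ‖z‖ := sum_le_sum fun j _ => by gcongr; exact hA i j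
    _ = Fintype.card ι * C * ‖z‖ := by rw [sum_const, card_univ, nsmul_eq_mul, mul_assoc]

theorem eqOn_zero_of_hasDerivWithinAt_mulVec {ι : Type*} [Fintype ι] {A : ℝ → Matrix ι ι ℝ}
    {C : ℝ} {a b : ℝ} {d : ℝ → ι → ℝ} (hA : ∀ t ∈ Ioc a b, ∀ i j, |A t i j| ≤ C)
    (hd : ∀ t ∈ Icc a b, HasDerivWithinAt d (A t *ᵥ d t) (Icc a b) t) (hb : d b = 0) :
    EqOn d 0 (Icc a b) := by
  have hlip : ∀ t ∈ Ioc a b,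
      LipschitzOnWith (Fintype.card ι * C.toNNReal) (A t *ᵥ ·) univ := by
    refine fun t ht => (LipschitzWith.of_dist_le_mul fun x y => ?_).lipschitzOnWith
    rw [dist_eq_norm, dist_eq_norm, ← Matrix.mulVec_sub]
    exact_mod_cast Matrix.norm_mulVec_le_of_abs_le
      (fun i j => (hA t ht i j).trans (Real.le_coe_toNNReal C)) _
  refine ODE_solution_unique_of_mem_Icc_left hlip
    (fun t ht => (hd t ht).continuousWithinAt)
    (fun t ht => (hd t (Ioc_subset_Icc_self ht)).mono_of_mem_nhdsWithin
      (Icc_mem_nhdsLE_of_mem ht)) (fun _ _ => mem_univ _)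
    continuousOn_const (fun t _ => ?_) (fun _ _ => mem_univ _) hb
  rw [Pi.zero_apply, Matrix.mulVec_zero]
  exact hasDerivWithinAt_const t (Iic t) (0 : ι → ℝ)

theorem hasDerivAt_pow_div {y : ℝ} (hy : y ≠ 0) (k : ℕ) :
    HasDerivAt (fun z : ℝ => z ^ k) (k * y ^ k / y) y := by
  refine (hasDerivAt_pow k y).congr_deriv ?_
  rw [eq_div_iff hy]
  rcases k with _ | k
  · simp
  · rw [Nat.add_sub_cancel, pow_succ]; ring

namespace LDPC

noncomputable def vvSolution (L : Finset ℕ) (lam : ℕ → ℝ) (ε : ℝ) (k s : ℕ) (y : ℝ) : ℝ :=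
  -((k : ℝ) * (s : ℝ) * lhat lam ε k y * lhat lam ε s y / eF L lam ε y ^ 2) * Ff L lam ε y
  + (ε * lhat lam ε k y * lhat lam ε s y / eF L lam ε y) *
      ((k : ℝ) * (y ^ s - 1) + (s : ℝ) * (y ^ k - 1))
  + (if k = s then (1 : ℝ) else 0) * (k : ℝ) * lhat lam ε k y * (1 - ε * y ^ k)

/-- The linear part of the variable–variable system, acting on families indexed by the pairs
`(k, s) ∈ L × L`. -/
noncomputable def vvCoeffMatrix (L : Finset ℕ) (lam : ℕ → ℝ) (ε y : ℝ) : Matrix (L × L) (L × L) ℝ :=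
  fun p q => -(xF L lam ε y) *
    (((p.2 : ℝ) * lhat lam ε p.2 y / eF L lam ε y ^ 2) * (if q.1 = p.1 then 1 else 0)
      + ((p.1 : ℝ) * lhat lam ε p.1 y / eF L lam ε y ^ 2) * (if q.1 = p.2 then 1 else 0)
      - (((p.1 : ℝ) + (p.2 : ℝ)) / eF L lam ε y) * (if q = p then 1 else 0))

section
variable {L : Finset ℕ} {lam : ℕ → ℝ} {ε : ℝ}

theorem sum_lhat (hL : ∀ t ∈ L, 1 ≤ t) (y : ℝ) : ∑ t ∈ L, lhat lam ε t y = eF L lam ε y := by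
  simp only [eF, xF, lamP, lhat, mul_sum, sum_mul]
  refine sum_congr rfl fun t ht => ?_
  obtain ⟨u, rfl⟩ : ∃ u, t = u + 1 := ⟨t - 1, by have := hL t ht; omega⟩
  rw [Nat.add_sub_cancel, pow_succ]
  ring

theorem xF_eq_eF_div {y : ℝ} (hy : y ≠ 0) : xF L lam ε y = eF L lam ε y / y := by
  rw [eF, mul_div_cancel_right₀ _ hy]

theorem lhat_pos (hlam : ∀ t ∈ L, 0 < lam t) (hε : 0 < ε) {k : ℕ} (hk : k ∈ L) {y : ℝ}
    (hy : 0 < y) : 0 < lhat lam ε k y := by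
  have := hlam k hk; unfold lhat; positivity

theorem lhat_le_eF (hlam : ∀ t ∈ L, 0 < lam t) (hε : 0 < ε) (hL : ∀ t ∈ L, 1 ≤ t) {k : ℕ}
    (hk : k ∈ L) {y : ℝ} (hy : 0 < y) : lhat lam ε k y ≤ eF L lam ε y := by
  rw [← sum_lhat hL y]
  exact single_le_sum (f := fun t => lhat lam ε t y) (fun t ht => (lhat_pos hlam hε ht hy).le) hk

theorem hasDerivAt_lhat {y : ℝ} (hy : y ≠ 0) (k : ℕ) :
    HasDerivAt (lhat lam ε k) (k * lhat lam ε k y / y) y := by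
  refine ((hasDerivAt_pow_div hy k).const_mul (ε * lam k)).congr_deriv ?_
  simp only [lhat]; ring

theorem hasDerivAt_eF (hL : ∀ t ∈ L, 1 ≤ t) {y : ℝ} (hy : y ≠ 0) :
    HasDerivAt (eF L lam ε) ((∑ t ∈ L, t * lhat lam ε t y) / y) y := by
  rw [show eF L lam ε = fun z => ∑ t ∈ L, lhat lam ε t z from funext fun z => (sum_lhat hL z).symm,
    sum_div]
  exact HasDerivAt.fun_sum fun t _ => hasDerivAt_lhat hy t

theorem hasDerivAt_Ff (hL : ∀ t ∈ L, 1 ≤ t) {y : ℝ} (hy : y ≠ 0) :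
    HasDerivAt (Ff L lam ε)
      ((2 * ε * ∑ t ∈ L, lhat lam ε t y * (y ^ t - 1) + eF L lam ε y) / y) y := by
  rw [← sum_lhat hL, mul_sum, ← sum_add_distrib, sum_div]
  refine HasDerivAt.fun_sum fun t ht => ?_
  have ht0 : (t : ℝ) ≠ 0 := by have := hL t ht; positivity
  have hb := (hasDerivAt_pow_div hy t).sub_const 1
  have h := ((hb.pow 2).const_mul (ε ^ 2)).add (hb.const_mul ε) |>.const_mul (lam t / t)
  refine h.congr_deriv ?_
  simp only [lhat]; field_simp; ring

theorem vvSolution_one (k s : ℕ) :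
    vvSolution L lam ε k s 1 = (if k = s then (1 : ℝ) else 0) * k * lam k * ε * (1 - ε) := by
  simp only [vvSolution, Ff, lhat, one_pow, sub_self, ne_eq, OfNat.ofNat_ne_zero, not_false_eq_true,
    zero_pow, mul_zero, add_zero, sum_const_zero, zero_add]
  ring

theorem sum_vvSolution {k : ℕ} (hk : k ∈ L) (y : ℝ) :
    ∑ t ∈ L, vvSolution L lam ε k t y =
      -(k * lhat lam ε k y / eF L lam ε y ^ 2) * Ff L lam ε y * ∑ t ∈ L, t * lhat lam ε t y
      + (ε * lhat lam ε k y / eF L lam ε y) *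
          (k * ∑ t ∈ L, lhat lam ε t y * (y ^ t - 1) + (y ^ k - 1) * ∑ t ∈ L, t * lhat lam ε t y)
      + k * lhat lam ε k y * (1 - ε * y ^ k) := by
  have h : ∀ t ∈ L, vvSolution L lam ε k t y =
      -(k * lhat lam ε k y / eF L lam ε y ^ 2) * Ff L lam ε y * (t * lhat lam ε t y)
      + (ε * lhat lam ε k y / eF L lam ε y) *
          (k * (lhat lam ε t y * (y ^ t - 1)) + (y ^ k - 1) * (t * lhat lam ε t y))
      + if k = t then k * lhat lam ε k y * (1 - ε * y ^ k) else 0 := by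
    intro t _; unfold vvSolution; split_ifs <;> ring
  rw [sum_congr rfl h, sum_add_distrib, sum_add_distrib, sum_ite_eq, if_pos hk, ← mul_sum,
    ← mul_sum, sum_add_distrib, ← mul_sum, ← mul_sum]

theorem hasDerivAt_vvSolution (hlam : ∀ t ∈ L, 0 < lam t) (hε : 0 < ε) (hL : ∀ t ∈ L, 1 ≤ t)
    {k s : ℕ} (hk : k ∈ L) (hs : s ∈ L) {y : ℝ} (hy : 0 < y) :
    HasDerivAt (vvSolution L lam ε k s)
      (-(xF L lam ε y) *
          (((s : ℝ) * lhat lam ε s y / eF L lam ε y ^ 2) * ∑ t ∈ L, vvSolution L lam ε k t y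
            + ((k : ℝ) * lhat lam ε k y / eF L lam ε y ^ 2) * ∑ t ∈ L, vvSolution L lam ε s t y
            - (((k : ℝ) + (s : ℝ)) / eF L lam ε y) * vvSolution L lam ε k s y)
        - xF L lam ε y * (k : ℝ) * (s : ℝ) * (lhat lam ε k y / eF L lam ε y) *
            ((if k = s then (1 : ℝ) else 0) - lhat lam ε s y / eF L lam ε y)) y := by
  have he : eF L lam ε y ≠ 0 :=
    ((lhat_pos hlam hε hk hy).trans_le (lhat_le_eF hlam hε hL hk hy)).ne'
  have hlk := hasDerivAt_lhat (lam := lam) (ε := ε) hy.ne' k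
  have hls := hasDerivAt_lhat (lam := lam) (ε := ε) hy.ne' s
  have hpk := hasDerivAt_pow_div hy.ne' k
  have hps := hasDerivAt_pow_div hy.ne' s
  have heF := hasDerivAt_eF (lam := lam) (ε := ε) hL hy.ne'
  have hF := hasDerivAt_Ff (lam := lam) (ε := ε) hL hy.ne'
  have h := (((((hlk.const_mul ((k : ℝ) * s)).fun_mul hls).fun_div (heF.fun_pow 2)
    (pow_ne_zero 2 he)).fun_neg.fun_mul hF).fun_add ((((hlk.const_mul ε).fun_mul hls).fun_div heF
      he).fun_mul (((hps.sub_const 1).const_mul (k : ℝ)).fun_add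
        ((hpk.sub_const 1).const_mul (s : ℝ))))).fun_add
    ((hlk.const_mul ((if k = s then (1 : ℝ) else 0) * k)).fun_mul ((hpk.const_mul ε).const_sub 1))
  refine h.congr_deriv ?_
  rw [sum_vvSolution hk, sum_vvSolution hs, xF_eq_eF_div hy.ne']
  simp only [vvSolution]
  generalize ∑ t ∈ L, t * lhat lam ε t y = m, ∑ t ∈ L, lhat lam ε t y * (y ^ t - 1) = S
  rcases eq_or_ne k s with rfl | hks
  · simp only [if_true]
    field_simp
    ring
  · simp only [if_neg hks]
    field_simp
    ring

theorem vvCoeffMatrix_mulVec (y : ℝ) (X : L × L → ℝ) (p : L × L) :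
    (vvCoeffMatrix L lam ε y *ᵥ X) p = -(xF L lam ε y) *
      (((p.2 : ℝ) * lhat lam ε p.2 y / eF L lam ε y ^ 2) * ∑ t, X (p.1, t)
        + ((p.1 : ℝ) * lhat lam ε p.1 y / eF L lam ε y ^ 2) * ∑ t, X (p.2, t)
        - (((p.1 : ℝ) + (p.2 : ℝ)) / eF L lam ε y) * X p) := by
  have hfst (a : L) : ∑ q : L × L, (if q.1 = a then 1 else 0) * X q = ∑ t, X (a, t) := by
    simp [Fintype.sum_prod_type_right]
  have hdiag : ∑ q : L × L, (if q = p then 1 else 0) * X q = X p := by simp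
  simp only [vvCoeffMatrix, Matrix.mulVec, dotProduct, ← hfst, ← hdiag, mul_sum, ← sum_add_distrib,
    ← sum_sub_distrib]
  exact sum_congr rfl fun q _ => by ring

theorem abs_vvCoeffMatrix_le (hlam : ∀ t ∈ L, 0 < lam t) (hε : 0 < ε) (hL : ∀ t ∈ L, 1 ≤ t) {y : ℝ}
    (hy : 0 < y) (p q : L × L) :
    |vvCoeffMatrix L lam ε y p q| ≤ 2 * ((p.1 : ℝ) + p.2) / y := by
  have he : 0 < eF L lam ε y :=
    (lhat_pos hlam hε p.1.2 hy).trans_le (lhat_le_eF hlam hε hL p.1.2 hy)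
  have hratio (t : L) : 0 ≤ lhat lam ε t y / eF L lam ε y ∧ lhat lam ε t y / eF L lam ε y ≤ 1 :=
    ⟨div_nonneg (lhat_pos hlam hε t.2 hy).le he.le,
      (div_le_one he).2 (lhat_le_eF hlam hε hL t.2 hy)⟩
  have hentry : vvCoeffMatrix L lam ε y p q =
      -((p.2 / y) * (lhat lam ε p.2 y / eF L lam ε y) * (if q.1 = p.1 then 1 else 0)
        + (p.1 / y) * (lhat lam ε p.1 y / eF L lam ε y) * (if q.1 = p.2 then 1 else 0)
        - (p.1 / y + p.2 / y) * (if q = p then 1 else 0)) := by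
    rw [vvCoeffMatrix, xF_eq_eF_div hy.ne']; field_simp
  have hcoef (t : L) : 0 ≤ (t / y) * (lhat lam ε t y / eF L lam ε y) ∧
      (t / y) * (lhat lam ε t y / eF L lam ε y) ≤ t / y :=
    ⟨mul_nonneg (by positivity) (hratio t).1,
      mul_le_of_le_one_right (by positivity) (hratio t).2⟩
  obtain ⟨h1, h1'⟩ := hcoef p.1
  obtain ⟨h2, h2'⟩ := hcoef p.2
  rw [hentry, abs_le, show 2 * ((p.1 : ℝ) + p.2) / y = 2 * (p.1 / y + p.2 / y) by ring]
  split_ifs <;> constructor <;> linarith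

end

theorem eqOn_vvSolution {L : Finset ℕ} {lam : ℕ → ℝ} {ε : ℝ} {δll : ℕ → ℕ → ℝ → ℝ}
    (hlam : ∀ t ∈ L, 0 < lam t) (hε : 0 < ε) (hL : ∀ t ∈ L, 1 ≤ t) (hvv : CEvv L lam ε δll)
    {k s : ℕ} (hk : k ∈ L) (hs : s ∈ L) : EqOn (δll k s) (vvSolution L lam ε k s) (Ioc 0 1) := by
  intro a ha
  let d : ℝ → L × L → ℝ := fun y p => δll p.1 p.2 y - vvSolution L lam ε p.1 p.2 y
  have hsum (y : ℝ) (u : L) :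
      ∑ t, d y (u, t) = ∑ t ∈ L, δll u t y - ∑ t ∈ L, vvSolution L lam ε u t y := by
    rw [sum_sub_distrib, sum_coe_sort L (fun t => δll u t y),
      sum_coe_sort L (fun t => vvSolution L lam ε u t y)]
  have hd : ∀ y ∈ Icc a 1, HasDerivWithinAt d (vvCoeffMatrix L lam ε y *ᵥ d y) (Icc a 1) y := by
    intro y hy
    have hy0 : 0 < y := ha.1.trans_le hy.1
    refine hasDerivWithinAt_pi.2 fun p => ?_
    have h := ((hvv.1 p.1 p.1.2 p.2 p.2.2 y ⟨hy0, hy.2⟩).mono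
      fun z (hz : z ∈ Icc a 1) => ⟨ha.1.trans_le hz.1, hz.2⟩).sub
        (hasDerivAt_vvSolution hlam hε hL p.1.2 p.2.2 hy0).hasDerivWithinAt
    refine h.congr_deriv ?_
    rw [vvCoeffMatrix_mulVec, hsum, hsum]
    ring
  have hbound : ∀ y ∈ Ioc a 1, ∀ p q,
      |vvCoeffMatrix L lam ε y p q| ≤ 4 * (∑ t ∈ L, (t : ℝ)) / a := by
    intro y hy p q
    have hle (u : L) : (u : ℝ) ≤ ∑ t ∈ L, (t : ℝ) :=
      single_le_sum (f := fun t : ℕ => (t : ℝ)) (fun _ _ => Nat.cast_nonneg _) u.2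
    calc |vvCoeffMatrix L lam ε y p q| ≤ 2 * ((p.1 : ℝ) + p.2) / y :=
          abs_vvCoeffMatrix_le hlam hε hL (ha.1.trans hy.1) p q
      _ ≤ 2 * ((p.1 : ℝ) + p.2) / a := by gcongr; exacts [ha.1, hy.1.le]
      _ ≤ 4 * (∑ t ∈ L, (t : ℝ)) / a :=
          div_le_div_of_nonneg_right (by linarith [hle p.1, hle p.2]) ha.1.le
  have h1 : d 1 = 0 := funext fun p => by
    simp only [d, hvv.2 p.1 p.1.2 p.2 p.2.2, vvSolution_one, Pi.zero_apply, sub_self]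
  have := congrFun (eqOn_zero_of_hasDerivWithinAt_mulVec hbound hd h1 (left_mem_Icc.2 ha.2))
    (⟨k, hk⟩, ⟨s, hs⟩)
  exact sub_eq_zero.1 this

theorem statement_0_general
    (L : Finset ℕ)
    (hL2 : ∀ k ∈ L, 2 ≤ k)
    (lam : ℕ → ℝ)
    (hlamPos : ∀ k ∈ L, 0 < lam k)
    (ε : ℝ) (hε : ε ∈ Set.Ioo (0 : ℝ) 1)
    (δll : ℕ → ℕ → ℝ → ℝ) (hvv : CEvv L lam ε δll) :
    ∀ k ∈ L, ∀ s ∈ L, ∀ y ∈ Set.Ioc (0 : ℝ) 1,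
      δll k s y =
        -((k : ℝ) * (s : ℝ) * lhat lam ε k y * lhat lam ε s y / eF L lam ε y ^ 2) * Ff L lam ε y
        + (ε * lhat lam ε k y * lhat lam ε s y / eF L lam ε y) *
            ((k : ℝ) * (y ^ s - 1) + (s : ℝ) * (y ^ k - 1))
        + (if k = s then (1 : ℝ) else 0) * (k : ℝ) * lhat lam ε k y * (1 - ε * y ^ k) :=
  fun _ hk _ hs _ hy =>
    eqOn_vvSolution hlamPos hε.1 (fun t ht => one_le_two.trans (hL2 t ht)) hvv hk hs hy

theorem statement_0
    (L R : Finset ℕ) (hL : L.Nonempty) (hR : R.Nonempty)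
    (hL2 : ∀ k ∈ L, 2 ≤ k) (hR2 : ∀ k ∈ R, 2 ≤ k)
    (lam rho : ℕ → ℝ)
    (hlamPos : ∀ k ∈ L, 0 < lam k) (hlamSum : ∑ k ∈ L, lam k = 1)
    (hrhoPos : ∀ k ∈ R, 0 < rho k) (hrhoSum : ∑ k ∈ R, rho k = 1)
    (ε : ℝ) (hε : ε ∈ Set.Ioo (0 : ℝ) 1)
    (δll : ℕ → ℕ → ℝ → ℝ) (hvv : CEvv L lam ε δll) :
    ∀ k ∈ L, ∀ s ∈ L, ∀ y ∈ Set.Ioc (0 : ℝ) 1,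
      δll k s y =
        -((k : ℝ) * (s : ℝ) * lhat lam ε k y * lhat lam ε s y / eF L lam ε y ^ 2) * Ff L lam ε y
        + (ε * lhat lam ε k y * lhat lam ε s y / eF L lam ε y) *
            ((k : ℝ) * (y ^ s - 1) + (s : ℝ) * (y ^ k - 1))
        + (if k = s then (1 : ℝ) else 0) * (k : ℝ) * lhat lam ε k y * (1 - ε * y ^ k) :=
  statement_0_general L hL2 lam hlamPos ε hε δll hvv

end LDPC
end

section
/- Under the variable–variable block of covariance evolution with its initial conditions, for all y ∈ (0,1] one has Σ_{k∈L} Σ_{s∈L} δ^{l_k,l_s}(y)/(k s) = ε ε̃ Σ_{i∈L} λ_i/i. (Lemma 1, equation (9).) -/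
/-!
The antisymmetric part `δ^{l_k,l_s} - δ^{l_s,l_k}` solves the Euler equation `y f' = (k + s) f`
and vanishes at `y = 1`, so the variable–variable block is symmetric. Given this symmetry and
`Σ_k l̂_k = e`, in the derivative of `Σ_{k,s} δ^{l_k,l_s} / (k s)` the coupling terms contribute
`-2xQ/e` and `+2xQ/e` with `Q = Σ_k δ^{l_k,l_Σ} / k`, and the forcing terms `-x` and `+x`.
So the weighted sum is constant on `(0, 1]` and equals its value at `y = 1`.
-/

open Finset

namespace LDPC

theorem _root_.Convex.eq_of_hasDerivWithinAt_zero {G : Type*} [NormedAddCommGroup G]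
    [NormedSpace ℝ G] {f : ℝ → G} {s : Set ℝ} (hs : Convex ℝ s)
    (hf : ∀ x ∈ s, HasDerivWithinAt f 0 s x) {x y : ℝ} (hx : x ∈ s) (hy : y ∈ s) :
    f x = f y := by
  simpa only [norm_zero, le_refl, implies_true, zero_mul, norm_le_zero_iff, sub_eq_zero,
    eq_comm] using hs.norm_image_sub_le_of_norm_hasDerivWithin_le hf (C := 0) (by simp) hx hy

theorem eq_zero_of_hasDerivWithinAt_natCast_div_mul {f : ℝ → ℝ} {n : ℕ}
    (hf : ∀ y ∈ Set.Ioc (0 : ℝ) 1, HasDerivWithinAt f (n / y * f y) (Set.Ioc 0 1) y)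
    (h1 : f 1 = 0) {y : ℝ} (hy : y ∈ Set.Ioc (0 : ℝ) 1) : f y = 0 := by
  have hquot : ∀ w ∈ Set.Ioc (0 : ℝ) 1,
      HasDerivWithinAt (fun u => f u / u ^ n) 0 (Set.Ioc 0 1) w := by
    intro w hw
    have hw0 : w ≠ 0 := hw.1.ne'
    refine ((hf w hw).div (hasDerivWithinAt_pow n w) (pow_ne_zero n hw0)).congr_deriv ?_
    rcases n with _ | n
    · simp
    · rw [pow_succ]
      push_cast
      field_simp
      ring
  have := (convex_Ioc (0 : ℝ) 1).eq_of_hasDerivWithinAt_zero hquot hy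
    (show (1 : ℝ) ∈ Set.Ioc 0 1 by norm_num)
  simpa [h1, hy.1.ne'] using this

theorem sum_lhat_eq_eF {L : Finset ℕ} (hL : ∀ k ∈ L, 0 < k) (lam : ℕ → ℝ) (ε y : ℝ) :
    ∑ k ∈ L, lhat lam ε k y = eF L lam ε y := by
  simp only [eF, xF, lamP, lhat, Finset.mul_sum, Finset.sum_mul]
  refine Finset.sum_congr rfl fun k hk => ?_
  rw [← Nat.sub_add_cancel (hL k hk), pow_succ, Nat.add_sub_cancel]
  ring

theorem xF_pos {L : Finset ℕ} (hL : L.Nonempty) {lam : ℕ → ℝ} (hlam : ∀ k ∈ L, 0 < lam k)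
    {ε y : ℝ} (hε : 0 < ε) (hy : 0 < y) : 0 < xF L lam ε y :=
  mul_pos hε (Finset.sum_pos (fun k hk => mul_pos (hlam k hk) (pow_pos hy _)) hL)

/-- `X`, `E`, `l t`, `d k s` stand for `x`, `e`, `l̂_t`, `δ^{l_k,l_s}` at the current `y`. -/
noncomputable def vvDrift (L : Finset ℕ) (X E : ℝ) (l : ℕ → ℝ) (d : ℕ → ℕ → ℝ) (k s : ℕ) : ℝ :=
  -X * (((s : ℝ) * l s / E ^ 2) * ∑ t ∈ L, d k t + ((k : ℝ) * l k / E ^ 2) * ∑ t ∈ L, d s t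
      - (((k : ℝ) + (s : ℝ)) / E) * d k s)
    - X * (k : ℝ) * (s : ℝ) * (l k / E) * ((if k = s then (1 : ℝ) else 0) - l s / E)

theorem CEvv.hasDerivWithinAt {L : Finset ℕ} {lam : ℕ → ℝ} {ε : ℝ} {δll : ℕ → ℕ → ℝ → ℝ}
    (hvv : CEvv L lam ε δll) {k s : ℕ} (hk : k ∈ L) (hs : s ∈ L) {y : ℝ}
    (hy : y ∈ Set.Ioc (0 : ℝ) 1) :
    HasDerivWithinAt (δll k s) (vvDrift L (xF L lam ε y) (eF L lam ε y)
      (fun t => lhat lam ε t y) (fun i j => δll i j y) k s) (Set.Ioc 0 1) y :=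
  hvv.1 k hk s hs y hy

theorem sum_sum_vvDrift_div_mul_eq_zero {L : Finset ℕ} (hL : ∀ k ∈ L, 0 < k) {X E : ℝ}
    (hE : E ≠ 0) {l : ℕ → ℝ} {d : ℕ → ℕ → ℝ} (hl : ∑ t ∈ L, l t = E)
    (hd : ∀ k ∈ L, ∀ s ∈ L, d k s = d s k) :
    ∑ k ∈ L, ∑ s ∈ L, vvDrift L X E l d k s / ((k : ℝ) * (s : ℝ)) = 0 := by
  set D : ℕ → ℝ := fun k => ∑ t ∈ L, d k t
  have hexpand : ∀ k ∈ L, ∀ s ∈ L, vvDrift L X E l d k s / ((k : ℝ) * (s : ℝ)) =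
      X / E * (d k s / s + d k s / k) - X / E ^ 2 * (l s * (D k / k) + l k * (D s / s))
        - (if k = s then X / E * l k else 0) + X / E ^ 2 * (l k * l s) := by
    intro k hk s hs
    have := (Nat.cast_pos (α := ℝ)).2 (hL k hk)
    have := (Nat.cast_pos (α := ℝ)).2 (hL s hs)
    unfold vvDrift
    split_ifs with h
    · subst h; field_simp; ring
    · field_simp; ring
  have hcol : ∑ k ∈ L, ∑ s ∈ L, d k s / s = ∑ s ∈ L, D s / s := by
    rw [Finset.sum_comm]
    refine Finset.sum_congr rfl fun s hs => ?_
    rw [← Finset.sum_div]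
    exact congrArg (· / _) (Finset.sum_congr rfl fun k hk => hd k hk s hs)
  have hrow : ∑ k ∈ L, ∑ s ∈ L, d k s / k = ∑ k ∈ L, D k / k :=
    Finset.sum_congr rfl fun k _ => (Finset.sum_div ..).symm
  rw [Finset.sum_congr rfl fun k hk => Finset.sum_congr rfl (hexpand k hk)]
  simp only [Finset.sum_add_distrib, Finset.sum_sub_distrib, ← Finset.mul_sum, ← Finset.sum_mul,
    Finset.sum_ite_eq, Finset.sum_ite_mem, Finset.inter_self, hl, hcol, hrow]
  field_simp
  ring

section CovarianceEvolution

variable {L : Finset ℕ} {lam : ℕ → ℝ} {ε : ℝ} {δll : ℕ → ℕ → ℝ → ℝ}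

theorem CEvv.symm (hvv : CEvv L lam ε δll) (hx : ∀ y ∈ Set.Ioc (0 : ℝ) 1, xF L lam ε y ≠ 0)
    {k s : ℕ} (hk : k ∈ L) (hs : s ∈ L) {y : ℝ} (hy : y ∈ Set.Ioc (0 : ℝ) 1) :
    δll k s y = δll s k y := by
  rcases eq_or_ne k s with rfl | hks
  · rfl
  -- the coupling and forcing terms are symmetric in `(k, s)`, so they cancel here
  have hanti : ∀ w ∈ Set.Ioc (0 : ℝ) 1, HasDerivWithinAt (fun u => δll k s u - δll s k u)
      ((k + s : ℕ) / w * (δll k s w - δll s k w)) (Set.Ioc 0 1) w := by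
    intro w hw
    refine ((hvv.hasDerivWithinAt hk hs hw).sub (hvv.hasDerivWithinAt hs hk hw)).congr_deriv ?_
    have := hx w hw
    have := hw.1.ne'
    simp only [vvDrift, eF, if_neg hks, if_neg hks.symm]
    push_cast
    field_simp
    ring
  have h1 : δll k s 1 - δll s k 1 = 0 := by
    rw [hvv.2 k hk s hs, hvv.2 s hs k hk, if_neg hks, if_neg hks.symm]
    ring
  exact sub_eq_zero.mp (eq_zero_of_hasDerivWithinAt_natCast_div_mul hanti h1 hy)

theorem CEvv.hasDerivWithinAt_sum_sum_div_mul (hvv : CEvv L lam ε δll) (hL : ∀ k ∈ L, 0 < k)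
    (hx : ∀ y ∈ Set.Ioc (0 : ℝ) 1, xF L lam ε y ≠ 0) {y : ℝ} (hy : y ∈ Set.Ioc (0 : ℝ) 1) :
    HasDerivWithinAt (fun u => ∑ k ∈ L, ∑ s ∈ L, δll k s u / ((k : ℝ) * (s : ℝ))) 0
      (Set.Ioc 0 1) y := by
  have hE : eF L lam ε y ≠ 0 := mul_ne_zero (hx y hy) hy.1.ne'
  refine (HasDerivWithinAt.fun_sum fun k hk => HasDerivWithinAt.fun_sum fun s hs =>
    (hvv.hasDerivWithinAt hk hs hy).div_const _).congr_deriv ?_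
  exact sum_sum_vvDrift_div_mul_eq_zero hL hE (sum_lhat_eq_eF hL lam ε y)
    fun k hk s hs => hvv.symm hx hk hs hy

theorem CEvv.sum_sum_div_mul_one (hvv : CEvv L lam ε δll) (hL : ∀ k ∈ L, 0 < k) :
    ∑ k ∈ L, ∑ s ∈ L, δll k s 1 / ((k : ℝ) * (s : ℝ)) = ε * (1 - ε) * ∑ i ∈ L, lam i / i := by
  rw [Finset.mul_sum]
  refine Finset.sum_congr rfl fun k hk => ?_
  have := (Nat.cast_pos (α := ℝ)).2 (hL k hk)
  rw [Finset.sum_congr rfl fun s hs => by rw [hvv.2 k hk s hs]]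
  simp only [ite_mul, one_mul, zero_mul, ite_div, zero_div, Finset.sum_ite_eq, if_pos hk]
  field_simp

end CovarianceEvolution

theorem statement_3_general
    (L : Finset ℕ) (hL : L.Nonempty)
    (hL2 : ∀ k ∈ L, 2 ≤ k)
    (lam : ℕ → ℝ)
    (hlamPos : ∀ k ∈ L, 0 < lam k)
    (ε : ℝ) (hε : ε ∈ Set.Ioo (0 : ℝ) 1)
    (δll : ℕ → ℕ → ℝ → ℝ) (hvv : CEvv L lam ε δll) :
    ∀ y ∈ Set.Ioc (0 : ℝ) 1,
      (∑ k ∈ L, ∑ s ∈ L, δll k s y / ((k : ℝ) * (s : ℝ))) =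
        ε * (1 - ε) * ∑ i ∈ L, lam i / (i : ℝ) := by
  have hpos : ∀ k ∈ L, 0 < k := fun k hk => by have := hL2 k hk; omega
  have hx : ∀ y ∈ Set.Ioc (0 : ℝ) 1, xF L lam ε y ≠ 0 :=
    fun y hy => (xF_pos hL hlamPos hε.1 hy.1).ne'
  intro y hy
  exact ((convex_Ioc 0 1).eq_of_hasDerivWithinAt_zero
    (fun z hz => hvv.hasDerivWithinAt_sum_sum_div_mul hpos hx hz) hy
    (show (1 : ℝ) ∈ Set.Ioc 0 1 by norm_num)).trans (hvv.sum_sum_div_mul_one hpos)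

theorem statement_3
    (L R : Finset ℕ) (hL : L.Nonempty) (hR : R.Nonempty)
    (hL2 : ∀ k ∈ L, 2 ≤ k) (hR2 : ∀ k ∈ R, 2 ≤ k)
    (lam rho : ℕ → ℝ)
    (hlamPos : ∀ k ∈ L, 0 < lam k) (hlamSum : ∑ k ∈ L, lam k = 1)
    (hrhoPos : ∀ k ∈ R, 0 < rho k) (hrhoSum : ∑ k ∈ R, rho k = 1)
    (ε : ℝ) (hε : ε ∈ Set.Ioo (0 : ℝ) 1)
    (δll : ℕ → ℕ → ℝ → ℝ) (hvv : CEvv L lam ε δll) :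
    ∀ y ∈ Set.Ioc (0 : ℝ) 1,
      (∑ k ∈ L, ∑ s ∈ L, δll k s y / ((k : ℝ) * (s : ℝ))) =
        ε * (1 - ε) * ∑ i ∈ L, lam i / (i : ℝ) :=
  statement_3_general L hL hL2 lam hlamPos ε hε δll hvv

end LDPC
end
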